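/- arXiv:2211.16142 — 3 statements merged into one kernel-verified Lean document; each statement's English description precedes it below -/
import Mathlib

section
/- Let n ≥ 2 and α ∈ (0,1)^n with ∑ αᵢ = 1. Let ζ ∈ ℝⁿ with every ζᵢ < 0 and ∏ (-ζᵢ/αᵢ)^{αᵢ} = 1, and define ζ̃ᵢ = -αᵢ/ζᵢ. Then there exist constants C > 0 and ε > 0 such that -1 - ⟨ζ, ω⟩ ≥ C‖ω - ζ̃‖² whenever ω has all positive entries, ‖ω - ζ̃‖ ≤ ε, and ∏ ωᵢ^{αᵢ} = 1. -/
/-!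
With `tᵢ = ωᵢ / ζ̃ᵢ` the constraint becomes `∑ αᵢ log tᵢ = 0`, and since `αᵢ / ζ̃ᵢ = -ζᵢ` and
`∑ αᵢ = 1`, the objective is `-1 - ⟨ζ, ω⟩ = ∑ αᵢ (tᵢ - 1)`. Near `t = 1` the strict concavity
of the logarithm, `log t ≤ (t - 1) - (t - 1)² / 6`, turns the constraint into
`∑ αᵢ (tᵢ - 1)² ≤ 6 ∑ αᵢ (tᵢ - 1)`, and `αᵢ (tᵢ - 1)² = (αᵢ / ζ̃ᵢ²) (ωᵢ - ζ̃ᵢ)²`.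
-/

open Finset Real

lemma Real.log_le_sub_one_sub_sq_div_six {t : ℝ} (ht : 0 < t) (ht' : t ≤ 3 / 2) :
    log t ≤ t - 1 - (t - 1) ^ 2 / 6 := by
  set s := √t
  have hs : 0 < s := sqrt_pos.mpr ht
  have hs2 : s ^ 2 = t := sq_sqrt ht.le
  -- `log t = 2 log √t ≤ 2 (√t - 1)`, which is quadratically sharper than `t - 1` at `t = 1`.
  have hlog : log t ≤ 2 * (s - 1) := by
    have : log t = 2 * log s := by rw [← hs2, log_pow]; push_cast; ring
    linarith [log_le_sub_one_of_pos hs]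
  have hs_le : s ≤ 5 / 4 := by nlinarith
  nlinarith [mul_nonneg (sq_nonneg (s - 1)) (show (0 : ℝ) ≤ 6 - (s + 1) ^ 2 by nlinarith)]

section Weighted

variable {ι : Type*}

lemma exists_pos_forall_le_of_pos [Finite ι] {f : ι → ℝ} (hf : ∀ i, 0 < f i) :
    ∃ c, 0 < c ∧ ∀ i, c ≤ f i := by
  rcases isEmpty_or_nonempty ι with _ | _
  · exact ⟨1, one_pos, isEmptyElim⟩
  · obtain ⟨i₀, hi₀⟩ := Finite.exists_min f
    exact ⟨f i₀, hf i₀, hi₀⟩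

variable [Fintype ι] {α t ω z : ι → ℝ}

lemma sum_mul_log_eq_zero_of_prod_rpow_eq_one (ht : ∀ i, 0 < t i)
    (hprod : ∏ i, t i ^ α i = 1) : ∑ i, α i * log (t i) = 0 := by
  rw [← log_one, ← hprod, log_prod fun i _ => (rpow_pos_of_pos (ht i) _).ne']
  exact sum_congr rfl fun i _ => (log_rpow (ht i) _).symm

lemma sum_mul_sub_one_sq_le_of_prod_rpow_eq_one (hα : ∀ i, 0 ≤ α i) (ht : ∀ i, 0 < t i)
    (ht' : ∀ i, t i ≤ 3 / 2) (hprod : ∏ i, t i ^ α i = 1) :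
    ∑ i, α i * (t i - 1) ^ 2 ≤ 6 * ∑ i, α i * (t i - 1) := by
  have hlog : ∑ i, α i * log (t i) ≤ ∑ i, α i * (t i - 1 - (t i - 1) ^ 2 / 6) :=
    sum_le_sum fun i _ =>
      mul_le_mul_of_nonneg_left (log_le_sub_one_sub_sq_div_six (ht i) (ht' i)) (hα i)
  rw [sum_mul_log_eq_zero_of_prod_rpow_eq_one ht hprod] at hlog
  have hsplit : ∑ i, α i * (t i - 1 - (t i - 1) ^ 2 / 6)
      = ∑ i, α i * (t i - 1) - (∑ i, α i * (t i - 1) ^ 2) / 6 := by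
    rw [sum_div, ← sum_sub_distrib]
    exact sum_congr rfl fun i _ => by ring
  linarith

lemma sum_mul_sub_sq_le_of_prod_rpow_eq_one (hα : ∀ i, 0 ≤ α i) (hz : ∀ i, 0 < z i)
    (hω : ∀ i, 0 < ω i) (hωz : ∀ i, ω i - z i ≤ z i / 2)
    (hωprod : ∏ i, ω i ^ α i = 1) (hzprod : ∏ i, z i ^ α i = 1) :
    ∑ i, α i / z i ^ 2 * (ω i - z i) ^ 2 ≤ 6 * ∑ i, α i * (ω i / z i - 1) := by
  have hprod : ∏ i, (ω i / z i) ^ α i = 1 := by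
    simp only [div_rpow (hω _).le (hz _).le, prod_div_distrib, hωprod, hzprod, div_one]
  have hle i : ω i / z i ≤ 3 / 2 := by
    rw [div_le_iff₀ (hz i)]
    linarith [hωz i]
  convert sum_mul_sub_one_sq_le_of_prod_rpow_eq_one hα (fun i => div_pos (hω i) (hz i)) hle
    hprod using 2 with i
  field_simp [(hz i).ne']

end Weighted

theorem power_cone_quadratic_growth_general (n : ℕ) (α : Fin n → ℝ)
    (ζ ζt : EuclideanSpace ℝ (Fin n))
    (hα : ∀ i, 0 < α i ∧ α i < 1) (hαsum : ∑ i, α i = 1)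
    (hζ : ∀ i, ζ i < 0) (hζprod : ∏ i, (-ζ i / α i) ^ α i = 1)
    (hζt : ∀ i, ζt i = -α i / ζ i) :
    ∃ C : ℝ, 0 < C ∧ ∃ ε : ℝ, 0 < ε ∧
      ∀ ω : EuclideanSpace ℝ (Fin n), (∀ i, 0 < ω i) → ‖ω - ζt‖ ≤ ε →
        ∏ i, ω i ^ α i = 1 →
        C * ‖ω - ζt‖ ^ 2 ≤ -1 - ∑ i, ζ i * ω i := by
  have hαpos i : 0 < α i := (hα i).1
  have hζt_pos i : 0 < ζt i := by
    rw [hζt]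
    exact div_pos_of_neg_of_neg (neg_neg_of_pos (hαpos i)) (hζ i)
  have hζt_prod : ∏ i, ζt i ^ α i = 1 := by
    have hζt_inv i : ζt i = (-ζ i / α i)⁻¹ := by rw [hζt, inv_div, div_neg, neg_div]
    simp_rw [hζt_inv, inv_rpow (div_pos (neg_pos.2 (hζ _)) (hαpos _)).le, prod_inv_distrib,
      hζprod, inv_one]
  obtain ⟨c, hc, hc_le⟩ :=
    exists_pos_forall_le_of_pos fun i => div_pos (hαpos i) (pow_pos (hζt_pos i) 2)
  obtain ⟨ε, hε, hε_le⟩ := exists_pos_forall_le_of_pos fun i => half_pos (hζt_pos i)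
  refine ⟨c / 6, by positivity, ε, hε, fun ω hω hω_near hω_prod => ?_⟩
  have hωζt i : ω i - ζt i ≤ ζt i / 2 :=
    calc ω i - ζt i ≤ ‖(ω - ζt) i‖ := le_abs_self _
      _ ≤ ζt i / 2 := (PiLp.norm_apply_le _ i).trans (hω_near.trans (hε_le i))
  have hgrowth := sum_mul_sub_sq_le_of_prod_rpow_eq_one (fun i => (hαpos i).le) hζt_pos hω
    hωζt hω_prod hζt_prod
  have hlin : ∑ i, α i * (ω i / ζt i - 1) = -1 - ∑ i, ζ i * ω i := by
    have h i : α i * (ω i / ζt i - 1) = -(ζ i * ω i) - α i := by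
      rw [hζt]
      field_simp [(hζ i).ne, (hαpos i).ne']
    rw [sum_congr rfl fun i _ => h i, sum_sub_distrib, sum_neg_distrib, hαsum]
    ring
  have hquad : c * ‖ω - ζt‖ ^ 2 ≤ ∑ i, α i / ζt i ^ 2 * (ω i - ζt i) ^ 2 := by
    rw [EuclideanSpace.real_norm_sq_eq, mul_sum]
    refine sum_le_sum fun i _ => ?_
    rw [PiLp.sub_apply]
    exact mul_le_mul_of_nonneg_right (hc_le i) (sq_nonneg _)
  linarith

/-- Local quadratic growth: `-1 - ⟨ζ, ω⟩ ≥ C ‖ω - ζ̃‖²` near `ζ̃` on the set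
`{ω > 0 : ∏ ωᵢ^{αᵢ} = 1}`. -/
theorem power_cone_quadratic_growth (n : ℕ) (hn : 2 ≤ n) (α : Fin n → ℝ)
    (ζ ζt : EuclideanSpace ℝ (Fin n))
    (hα : ∀ i, 0 < α i ∧ α i < 1) (hαsum : ∑ i, α i = 1)
    (hζ : ∀ i, ζ i < 0) (hζprod : ∏ i, (-ζ i / α i) ^ α i = 1)
    (hζt : ∀ i, ζt i = -α i / ζ i) :
    ∃ C : ℝ, 0 < C ∧ ∃ ε : ℝ, 0 < ε ∧
      ∀ ω : EuclideanSpace ℝ (Fin n), (∀ i, 0 < ω i) → ‖ω - ζt‖ ≤ ε →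
        ∏ i, ω i ^ α i = 1 →
        C * ‖ω - ζt‖ ^ 2 ≤ -1 - ∑ i, ζ i * ω i :=
  power_cone_quadratic_growth_general n α ζ ζt hα hαsum hζ hζprod hζt
end

section
/- Let m ≥ 1, n ≥ 2, α ∈ (0,1)^n with ∑ αᵢ = 1. The dual cone of the generalized power cone P^α_{m,n} (under the Euclidean inner product on ℝ^{m+n}) equals { (z̄, z̃) ∈ ℝ^m × ℝⁿ : z̃ᵢ ≥ 0 for all i and ‖z̄‖ ≤ ∏ (z̃ᵢ/αᵢ)^{αᵢ} }. -/
/-!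
One inclusion is Cauchy–Schwarz in the first block followed by weighted AM-GM in the second:
`‖x̄‖ ‖z̄‖ ≤ ∏ (x̃ᵢ z̃ᵢ / αᵢ)^αᵢ ≤ ∑ x̃ᵢ z̃ᵢ`. Conversely, testing a dual vector `z` against
`(x̄, w)` with `x̄` antiparallel to `z̄` and `‖x̄‖ = ∏ wᵢ^αᵢ` gives `‖z̄‖ ∏ wᵢ^αᵢ ≤ ∑ wᵢ z̃ᵢ` for all
`w ≥ 0`; for `z̃ > 0` the choice `wᵢ = αᵢ / z̃ᵢ` yields the bound, and the boundary case follows by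
replacing `z̃` with `z̃ + ε` and letting `ε → 0`.
-/

open Finset

noncomputable section

abbrev E (m n : ℕ) : Type := WithLp 2 (EuclideanSpace ℝ (Fin m) × EuclideanSpace ℝ (Fin n))

def PowCone (m n : ℕ) (α : Fin n → ℝ) : Set (E m n) :=
  {x | (∀ i, 0 ≤ x.snd i) ∧ ‖x.fst‖ ≤ ∏ i, x.snd i ^ α i}

section WeightedProducts

variable {ι : Type*} [Fintype ι] {α : ι → ℝ}

theorem prod_rpow_mul_prod_div_rpow_le_sum_mul (hα : ∀ i, 0 ≤ α i) (hαsum : ∑ i, α i = 1)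
    {x z : ι → ℝ} (hx : ∀ i, 0 ≤ x i) (hz : ∀ i, 0 ≤ z i) :
    (∏ i, x i ^ α i) * ∏ i, (z i / α i) ^ α i ≤ ∑ i, x i * z i :=
  calc (∏ i, x i ^ α i) * ∏ i, (z i / α i) ^ α i
      = ∏ i, (x i * (z i / α i)) ^ α i := by
        rw [← prod_mul_distrib]
        exact prod_congr rfl fun i _ =>
          (Real.mul_rpow (hx i) (div_nonneg (hz i) (hα i))).symm
    _ ≤ ∑ i, α i * (x i * (z i / α i)) :=
        Real.geom_mean_le_arith_mean_weighted _ _ _ (fun i _ => hα i) hαsum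
          fun i _ => mul_nonneg (hx i) (div_nonneg (hz i) (hα i))
    _ ≤ ∑ i, x i * z i := by
        refine sum_le_sum fun i _ => ?_
        rcases (hα i).eq_or_lt with h | h
        · simp [← h, mul_nonneg (hx i) (hz i)]
        · rw [mul_div_assoc', mul_div_cancel₀ _ h.ne']

theorem le_prod_div_rpow_of_pos (hα : ∀ i, 0 ≤ α i) (hαsum : ∑ i, α i = 1)
    {z : ι → ℝ} (hz : ∀ i, 0 < z i) {s : ℝ}
    (h : ∀ w : ι → ℝ, (∀ i, 0 ≤ w i) → s * ∏ i, w i ^ α i ≤ ∑ i, w i * z i) :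
    s ≤ ∏ i, (z i / α i) ^ α i := by
  have hP : 0 < ∏ i, (z i / α i) ^ α i := by
    refine prod_pos fun i _ => ?_
    rcases (hα i).eq_or_lt with h | h
    · simp [← h]
    · exact Real.rpow_pos_of_pos (div_pos (hz i) h) _
  have hsum : ∑ i, α i / z i * z i = 1 := by
    rw [← hαsum]
    exact sum_congr rfl fun i _ => div_mul_cancel₀ _ (hz i).ne'
  have hprod : ∏ i, (α i / z i) ^ α i = (∏ i, (z i / α i) ^ α i)⁻¹ := by
    rw [← prod_inv_distrib]
    exact prod_congr rfl fun i _ => by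
      rw [← Real.inv_rpow (div_nonneg (hz i).le (hα i)), inv_div]
  -- the equality case of the weighted AM-GM inequality
  have hw := h (fun i => α i / z i) fun i => div_nonneg (hα i) (hz i).le
  rwa [hsum, hprod, ← div_eq_mul_inv, div_le_one hP] at hw

theorem le_prod_div_rpow (hα : ∀ i, 0 ≤ α i) (hαsum : ∑ i, α i = 1)
    {z : ι → ℝ} (hz : ∀ i, 0 ≤ z i) {s : ℝ}
    (h : ∀ w : ι → ℝ, (∀ i, 0 ≤ w i) → s * ∏ i, w i ^ α i ≤ ∑ i, w i * z i) :
    s ≤ ∏ i, (z i / α i) ^ α i := by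
  have hcont : Continuous fun ε : ℝ => ∏ i, ((z i + ε) / α i) ^ α i :=
    continuous_finsetProd _ fun i _ =>
      Continuous.rpow_const (by fun_prop) fun _ => Or.inr (hα i)
  have hlim : Filter.Tendsto (fun ε : ℝ => ∏ i, ((z i + ε) / α i) ^ α i)
      (nhdsWithin 0 (Set.Ioi 0)) (nhds (∏ i, (z i / α i) ^ α i)) := by
    simpa using (hcont.tendsto 0).mono_left nhdsWithin_le_nhds
  refine ge_of_tendsto hlim (eventually_nhdsWithin_of_forall fun ε (hε : 0 < ε) => ?_)
  refine le_prod_div_rpow_of_pos hα hαsum (fun i => by linarith [hz i]) fun w hw => ?_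
  calc s * ∏ i, w i ^ α i ≤ ∑ i, w i * z i := h w hw
    _ ≤ ∑ i, w i * (z i + ε) :=
      sum_le_sum fun i _ => mul_le_mul_of_nonneg_left (by linarith) (hw i)

end WeightedProducts

open RealInnerProductSpace

theorem exists_norm_le_inner_eq_neg_mul_norm {F : Type*} [NormedAddCommGroup F]
    [InnerProductSpace ℝ F] (u : F) {r : ℝ} (hr : 0 ≤ r) :
    ∃ v : F, ‖v‖ ≤ r ∧ ⟪v, u⟫ = -(r * ‖u‖) := by
  rcases eq_or_ne u 0 with rfl | hu
  · exact ⟨0, by simpa using hr, by simp⟩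
  have hu' : 0 < ‖u‖ := norm_pos_iff.mpr hu
  refine ⟨-((r / ‖u‖) • u), ?_, ?_⟩
  · rw [norm_neg, norm_smul, Real.norm_of_nonneg (by positivity), div_mul_cancel₀ _ hu'.ne']
  · rw [inner_neg_left, real_inner_smul_left, real_inner_self_eq_norm_mul_norm]
    field_simp

theorem inner_E_eq (m n : ℕ) (x y : E m n) :
    ⟪x, y⟫ = ⟪x.fst, y.fst⟫ + ∑ i, x.snd i * y.snd i := by
  rw [WithLp.prod_inner_apply]
  simp [PiLp.inner_apply, mul_comm]

variable {m n : ℕ} {α : Fin n → ℝ} {z : E m n}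

theorem snd_nonneg_of_mem_innerDual_powCone
    (hz : z ∈ ProperCone.innerDual (PowCone m n α)) (i : Fin n) : 0 ≤ z.snd i := by
  have hmem : WithLp.toLp 2 (0, EuclideanSpace.single i 1) ∈ PowCone m n α := by
    have hsingle : ∀ j, 0 ≤ (EuclideanSpace.single i (1 : ℝ)) j := fun j => by
      simp [PiLp.single_apply]; positivity
    refine ⟨hsingle, ?_⟩
    simpa using prod_nonneg fun j _ => Real.rpow_nonneg (hsingle j) (α j)
  have := ProperCone.mem_innerDual.mp hz hmem
  rw [inner_E_eq] at this
  simpa [PiLp.single_apply] using this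

theorem norm_mul_prod_rpow_le_of_mem_innerDual_powCone
    (hz : z ∈ ProperCone.innerDual (PowCone m n α)) (w : Fin n → ℝ) (hw : ∀ i, 0 ≤ w i) :
    ‖z.fst‖ * ∏ i, w i ^ α i ≤ ∑ i, w i * z.snd i := by
  obtain ⟨v, hv, hvz⟩ := exists_norm_le_inner_eq_neg_mul_norm z.fst
    (prod_nonneg fun i _ => Real.rpow_nonneg (hw i) (α i))
  have hmem : WithLp.toLp 2 (v, WithLp.toLp 2 w) ∈ PowCone m n α := ⟨hw, hv⟩
  have := ProperCone.mem_innerDual.mp hz hmem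
  rw [inner_E_eq] at this
  simp only [WithLp.toLp_fst, WithLp.toLp_snd, PiLp.toLp_apply, hvz] at this
  linarith

theorem powCone_dual_general (m n : ℕ) (α : Fin n → ℝ)
    (hα : ∀ i, 0 < α i ∧ α i < 1) (hαsum : ∑ i, α i = 1) :
    (ProperCone.innerDual (PowCone m n α) : Set (E m n)) =
      {z : E m n | (∀ i, 0 ≤ z.snd i) ∧ ‖z.fst‖ ≤ ∏ i, (z.snd i / α i) ^ α i} := by
  have hα0 : ∀ i, 0 ≤ α i := fun i => (hα i).1.le
  ext z
  constructor
  · intro hz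
    have hz_snd := snd_nonneg_of_mem_innerDual_powCone hz
    exact ⟨hz_snd, le_prod_div_rpow hα0 hαsum hz_snd
      (norm_mul_prod_rpow_le_of_mem_innerDual_powCone hz)⟩
  · rintro ⟨hz_snd, hz_fst⟩
    refine ProperCone.mem_innerDual.mpr fun x ⟨hx_snd, hx_fst⟩ => ?_
    have hCS : -(‖x.fst‖ * ‖z.fst‖) ≤ ⟪x.fst, z.fst⟫ :=
      neg_le_of_abs_le (abs_real_inner_le_norm _ _)
    have hAMGM := prod_rpow_mul_prod_div_rpow_le_sum_mul hα0 hαsum hx_snd hz_snd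
    have hprod : ‖x.fst‖ * ‖z.fst‖ ≤ (∏ i, x.snd i ^ α i) * ∏ i, (z.snd i / α i) ^ α i :=
      mul_le_mul hx_fst hz_fst (norm_nonneg _) (prod_nonneg fun i _ => Real.rpow_nonneg (hx_snd i) _)
    rw [inner_E_eq]
    linarith

/-- The dual cone of the generalized power cone. -/
theorem powCone_dual (m n : ℕ) (hm : 1 ≤ m) (hn : 2 ≤ n) (α : Fin n → ℝ)
    (hα : ∀ i, 0 < α i ∧ α i < 1) (hαsum : ∑ i, α i = 1) :
    (ProperCone.innerDual (PowCone m n α) : Set (E m n)) =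
      {z : E m n | (∀ i, 0 ≤ z.snd i) ∧ ‖z.fst‖ ≤ ∏ i, (z.snd i / α i) ^ α i} :=
  powCone_dual_general m n α hα hαsum
end
end

section
/- If a closed convex pointed cone K in a finite-dimensional Euclidean space decomposes as K = K₁ + K₂ with K₁, K₂ nonzero subsets of K and span(K₁) ∩ span(K₂) = {0}, then K₁ and K₂ are proper faces of K and dim K = dim K₁ + dim K₂. -/
open Finset Pointwise

lemma decomp_aux {V : Type*} [NormedAddCommGroup V]
    [InnerProductSpace ℝ V] [FiniteDimensional ℝ V]
    (K K₁ K₂ : Set V)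
    (hKclosed : IsClosed K) (hKconv : Convex ℝ K)
    (hKcone : ∀ x ∈ K, ∀ c : ℝ, 0 ≤ c → c • x ∈ K)
    (hKpointed : K ∩ (-K) = {0})
    (h1sub : K₁ ⊆ K) (h2sub : K₂ ⊆ K)
    (h2ne : K₂.Nonempty) (h2nz : K₂ ≠ {0})
    (hsum : K = K₁ + K₂)
    (hspan : Submodule.span ℝ K₁ ⊓ Submodule.span ℝ K₂ = ⊥) :
    IsClosed K₁ ∧ Convex ℝ K₁ ∧ (∀ x ∈ K₁, ∀ c : ℝ, 0 ≤ c → c • x ∈ K₁) ∧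
      (∀ x ∈ K, ∀ y ∈ K, x + y ∈ K₁ → x ∈ K₁ ∧ y ∈ K₁) ∧ K₁ ≠ K := by
  have hpt : ∀ x ∈ K, -x ∈ K → x = 0 := by
    intro x hx hnx
    have : x ∈ K ∩ (-K) := ⟨hx, by simpa using hnx⟩
    rw [hKpointed] at this
    exact this
  have hdec : ∀ x ∈ K, ∃ a ∈ K₁, ∃ b ∈ K₂, a + b = x := by
    intro x hx
    rw [hsum] at hx
    exact Set.mem_add.mp hx
  have hzero : ∀ v : V, v ∈ Submodule.span ℝ K₁ → v ∈ Submodule.span ℝ K₂ → v = 0 := by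
    intro v h1 h2
    have : v ∈ (⊥ : Submodule ℝ V) := hspan ▸ Submodule.mem_inf.mpr ⟨h1, h2⟩
    simpa using this
  -- key identification
  have hK1eq : K₁ = K ∩ (Submodule.span ℝ K₁ : Set V) := by
    apply Set.Subset.antisymm
    · exact fun x hx => ⟨h1sub hx, Submodule.subset_span hx⟩
    · rintro x ⟨hxK, hxs⟩
      obtain ⟨a, ha, b, hb, hab⟩ := hdec x hxK
      have hbs1 : b ∈ Submodule.span ℝ K₁ := by
        rw [show b = x - a by rw [← hab]; abel]
        exact Submodule.sub_mem _ hxs (Submodule.subset_span ha)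
      have hb0 : b = 0 := hzero b hbs1 (Submodule.subset_span hb)
      rw [← hab, hb0, add_zero]
      exact ha
  constructor
  · rw [hK1eq]
    exact hKclosed.inter (Submodule.closed_of_finiteDimensional _)
  refine ⟨?_, ?_, ?_, ?_⟩
  · rw [hK1eq]
    exact hKconv.inter (Submodule.span ℝ K₁).convex
  · intro x hx c hc
    rw [hK1eq] at hx ⊢
    exact ⟨hKcone x hx.1 c hc, Submodule.smul_mem _ c hx.2⟩
  · intro x hx y hy hxy
    obtain ⟨a₁, ha₁, a₂, ha₂, hax⟩ := hdec x hx
    obtain ⟨b₁, hb₁, b₂, hb₂, hby⟩ := hdec y hy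
    have hsum2 : (a₂ + b₂) ∈ Submodule.span ℝ K₁ := by
      have h1 : x + y ∈ Submodule.span ℝ K₁ := Submodule.subset_span hxy
      have h2 : a₁ + b₁ ∈ Submodule.span ℝ K₁ :=
        Submodule.add_mem _ (Submodule.subset_span ha₁) (Submodule.subset_span hb₁)
      have : a₂ + b₂ = (x + y) - (a₁ + b₁) := by rw [← hax, ← hby]; abel
      rw [this]
      exact Submodule.sub_mem _ h1 h2
    have h0 : a₂ + b₂ = 0 := hzero _ hsum2
      (Submodule.add_mem _ (Submodule.subset_span ha₂) (Submodule.subset_span hb₂))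
    have ha20 : a₂ = 0 := by
      apply hpt a₂ (h2sub ha₂)
      rw [neg_eq_of_add_eq_zero_right h0]
      exact h2sub hb₂
    have hb20 : b₂ = 0 := by rw [← h0, ha20, zero_add]
    constructor
    · rw [← hax, ha20, add_zero]; exact ha₁
    · rw [← hby, hb20, add_zero]; exact hb₁
  · intro hK1K
    apply h2nz
    apply Set.Subset.antisymm
    · intro b hb
      have hb1 : b ∈ Submodule.span ℝ K₁ := Submodule.subset_span (hK1K ▸ h2sub hb)
      exact hzero b hb1 (Submodule.subset_span hb)
    · rintro b rfl
      obtain ⟨c, hc⟩ := h2ne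
      have hc1 : c ∈ Submodule.span ℝ K₁ := Submodule.subset_span (hK1K ▸ h2sub hc)
      have : c = 0 := hzero c hc1 (Submodule.subset_span hc)
      rwa [← this]

/-- If a closed convex pointed cone decomposes as `K = K₁ + K₂` with trivially intersecting
spans, then `K₁` and `K₂` are proper faces of `K` and dimensions add. -/
theorem decomposition_gives_faces {V : Type*} [NormedAddCommGroup V]
    [InnerProductSpace ℝ V] [FiniteDimensional ℝ V]
    (K K₁ K₂ : Set V)
    (hKclosed : IsClosed K) (hKconv : Convex ℝ K)
    (hKcone : ∀ x ∈ K, ∀ c : ℝ, 0 ≤ c → c • x ∈ K)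
    (hKpointed : K ∩ (-K) = {0})
    (h1sub : K₁ ⊆ K) (h2sub : K₂ ⊆ K)
    (h1ne : K₁.Nonempty) (h2ne : K₂.Nonempty)
    (h1nz : K₁ ≠ {0}) (h2nz : K₂ ≠ {0})
    (hsum : K = K₁ + K₂)
    (hspan : Submodule.span ℝ K₁ ⊓ Submodule.span ℝ K₂ = ⊥) :
    (IsClosed K₁ ∧ Convex ℝ K₁ ∧ (∀ x ∈ K₁, ∀ c : ℝ, 0 ≤ c → c • x ∈ K₁) ∧
      (∀ x ∈ K, ∀ y ∈ K, x + y ∈ K₁ → x ∈ K₁ ∧ y ∈ K₁) ∧ K₁ ≠ K) ∧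
    (IsClosed K₂ ∧ Convex ℝ K₂ ∧ (∀ x ∈ K₂, ∀ c : ℝ, 0 ≤ c → c • x ∈ K₂) ∧
      (∀ x ∈ K, ∀ y ∈ K, x + y ∈ K₂ → x ∈ K₂ ∧ y ∈ K₂) ∧ K₂ ≠ K) ∧
    Module.finrank ℝ (Submodule.span ℝ K) =
      Module.finrank ℝ (Submodule.span ℝ K₁) + Module.finrank ℝ (Submodule.span ℝ K₂) := by
  refine ⟨decomp_aux K K₁ K₂ hKclosed hKconv hKcone hKpointed h1sub h2sub h2ne h2nz hsum hspan,
    decomp_aux K K₂ K₁ hKclosed hKconv hKcone hKpointed h2sub h1sub h1ne h1nz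
      (by rw [hsum, add_comm]) (by rw [inf_comm]; exact hspan), ?_⟩
  have hspanK : Submodule.span ℝ K = Submodule.span ℝ K₁ ⊔ Submodule.span ℝ K₂ := by
    apply le_antisymm
    · rw [Submodule.span_le]
      intro x hx
      rw [hsum] at hx
      obtain ⟨a, ha, b, hb, hab⟩ := Set.mem_add.mp hx
      rw [← hab]
      exact Submodule.add_mem _
        (Submodule.mem_sup_left (Submodule.subset_span ha))
        (Submodule.mem_sup_right (Submodule.subset_span hb))
    · exact sup_le (Submodule.span_mono h1sub) (Submodule.span_mono h2sub)
  rw [hspanK]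
  have := Submodule.finrank_sup_add_finrank_inf_eq (Submodule.span ℝ K₁) (Submodule.span ℝ K₂)
  rw [hspan, finrank_bot, add_zero] at this
  exact this
end
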